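/- arXiv:math/0501389 — 4 statements merged into one kernel-verified Lean document; each statement's English description precedes it below -/
import Mathlib

section
/- For every real x with 0 < x < π, one has the series identity cot x − 1/x = ∑_{m=1}^∞ 2x/(x² − (mπ)²), with the series converging absolutely. -/
/-!
Rescale Mathlib's Mittag-Leffler expansion of `π cot (π z)` (the logarithmic derivative of
Euler's sine product) by `z = x / π`. Absolute convergence comes for free: a summable real
series is absolutely summable.
-/

open Real

theorem Complex.hasSum_cot_sub_inv {z : ℂ} (hz : ∀ k : ℤ, z ≠ k * π) :
    HasSum (fun m : ℕ+ => 2 * z / (z ^ 2 - (m * π) ^ 2)) (cot z - 1 / z) := by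
  have hπ : (π : ℂ) ≠ 0 := ofReal_ne_zero.mpr pi_ne_zero
  have hw : z / π ∈ integerComplement := by
    rintro ⟨k, hk⟩
    exact hz k (by rw [hk, div_mul_cancel₀ _ hπ])
  have h := (summable_cotTerm hw).hasSum_iff_tendsto_nat.mpr (tendsto_logDeriv_euler_cot_sub hw)
  have hterm (n : ℕ) :
      cotTerm (z / π) n / π = 2 * z / (z ^ 2 - (((n + 1 : ℕ) : ℂ) * π) ^ 2) := by
    have h₁ := integerComplement_add_ne_zero hw ((n : ℤ) + 1)
    have h₂ := integerComplement_add_ne_zero hw (-((n : ℤ) + 1))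
    push_cast at h₁ h₂ ⊢
    rw [cotTerm_identity hw]
    field_simp
    ring
  have hsum : (π * cot (π * (z / π)) - 1 / (z / π)) / π = cot z - 1 / z := by
    rw [mul_div_cancel₀ _ hπ]
    field_simp
  rw [hasSum_pnat_iff_hasSum_succ (f := fun n : ℕ => 2 * z / (z ^ 2 - (n * π) ^ 2)), ← hsum]
  simpa only [hterm] using h.div_const (π : ℂ)

theorem Real.hasSum_cot_sub_inv {x : ℝ} (hx : ∀ k : ℤ, x ≠ k * π) :
    HasSum (fun m : ℕ+ => 2 * x / (x ^ 2 - (m * π) ^ 2)) (cot x - 1 / x) := by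
  rw [← Complex.hasSum_ofReal]
  push_cast
  exact Complex.hasSum_cot_sub_inv fun k hk => hx k (mod_cast hk)

theorem ne_int_mul_pi_of_pos_of_lt_pi {x : ℝ} (hx0 : 0 < x) (hxpi : x < π) (k : ℤ) :
    x ≠ k * π := by
  rintro rfl
  have hk0 : (0 : ℝ) < k := pos_of_mul_pos_left hx0 pi_pos.le
  have hk1 : (k : ℝ) < 1 := (mul_lt_iff_lt_one_left pi_pos).mp hxpi
  norm_cast at hk0 hk1
  omega

theorem cot_sub_inv_eq_tsum (x : ℝ) (hx0 : 0 < x) (hxpi : x < Real.pi) :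
    Summable (fun m : ℕ+ => |2 * x / (x ^ 2 - (m * Real.pi) ^ 2)|) ∧
    Real.cos x / Real.sin x - 1 / x
      = ∑' m : ℕ+, 2 * x / (x ^ 2 - (m * Real.pi) ^ 2) := by
  have h := Real.hasSum_cot_sub_inv (ne_int_mul_pi_of_pos_of_lt_pi hx0 hxpi)
  rw [Real.cot_eq_cos_div_sin] at h
  exact ⟨h.summable.abs, h.tsum_eq.symm⟩
end

section
/- For every real x with 0 ≤ x < π, log(sin x / x) = −∑_{j=1}^∞ c_j x^{2j}, where c_j = (1/(j π^{2j})) ∑_{m=1}^∞ 1/m^{2j}, and the series converges; at x = 0 the left side is interpreted as 0 (since sin x / x → 1). -/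
/-!
By Euler's product `sin x = x ∏ₘ (1 - x² / (m π)²)`, for `|x| < π` we get
`-log (sin x / x) = ∑ₘ -log (1 - rₘ)` with `rₘ = (x / (m π))² ∈ [0, 1)`. Expanding
`-log (1 - r) = ∑ₖ rᵏ / k` gives a double series of nonnegative terms, so the two summations
may be swapped, and the inner sum `∑ₘ rₘᵏ / k` is exactly `c_k x^{2k}`.
-/

/-- The coefficient `c_j = ζ(2j)/(j π^{2j})`. -/
noncomputable def cCoeff (j : ℕ+) : ℝ :=
  (1 / (j * Real.pi ^ (2 * (j : ℕ)))) * ∑' m : ℕ+, 1 / (m : ℝ) ^ (2 * (j : ℕ))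

open Real Filter Finset Topology

lemma hasSum_pnat_pow_div_log_of_abs_lt_one {r : ℝ} (hr : |r| < 1) :
    HasSum (fun k : ℕ+ => r ^ (k : ℕ) / k) (-log (1 - r)) := by
  rw [hasSum_pnat_iff_hasSum_succ (f := fun n : ℕ => r ^ n / n)]
  exact_mod_cast hasSum_pow_div_log_of_abs_lt_one hr

lemma neg_log_one_sub_le_div_one_sub {r : ℝ} (hr : r < 1) : -log (1 - r) ≤ r / (1 - r) := by
  have h := one_sub_inv_le_log_of_pos (sub_pos.2 hr)
  have : 1 - (1 - r)⁻¹ = -(r / (1 - r)) := by field_simp [(sub_pos.2 hr).ne']; ring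
  linarith

lemma hasSum_tsum_pow_div_tsum_neg_log_one_sub {ι : Type*} {r : ι → ℝ} (h0 : ∀ i, 0 ≤ r i)
    (h1 : ∀ i, r i < 1) (hs : Summable fun i => -log (1 - r i)) :
    HasSum (fun k : ℕ+ => (∑' i, r i ^ (k : ℕ)) / k) (∑' i, -log (1 - r i)) := by
  set F : ι × ℕ+ → ℝ := fun p => r p.1 ^ (p.2 : ℕ) / p.2
  have hF0 : 0 ≤ F := fun p => by have := h0 p.1; positivity
  have hrow : ∀ i, HasSum (fun k => F (i, k)) (-log (1 - r i)) := fun i =>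
    hasSum_pnat_pow_div_log_of_abs_lt_one (abs_lt.2 ⟨by linarith [h0 i], h1 i⟩)
  have hF : Summable F := (summable_prod_of_nonneg hF0).2
    ⟨fun i => (hrow i).summable, by simpa only [(hrow _).tsum_eq] using hs⟩
  have hsum : HasSum F (∑' i, -log (1 - r i)) :=
    (hF.hasSum.prod_fiberwise hrow).tsum_eq ▸ hF.hasSum
  have hcol : ∀ k : ℕ+, Summable fun i => F (i, k) :=
    ((summable_prod_of_nonneg fun p : ℕ+ × ι => hF0 p.swap).1 hF.prod_symm).1
  simpa only [F, tsum_div_const] using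
    ((Equiv.prodComm ℕ+ ι).hasSum_iff.2 hsum).prod_fiberwise fun k => (hcol k).hasSum

lemma sq_div_mul_pi_lt_one {x y : ℝ} (hx : |x| < π) (hy : 1 ≤ y) : (x / (y * π)) ^ 2 < 1 := by
  have hyπ : π ≤ y * π := le_mul_of_one_le_left pi_pos.le hy
  rw [sq_lt_one_iff_abs_lt_one, abs_div, div_lt_one (by positivity),
    abs_of_pos (a := y * π) (by linarith [pi_pos])]
  linarith

lemma summable_neg_log_one_sub_sq_div_mul_pi {x : ℝ} (hx : |x| < π) :
    Summable fun m : ℕ+ => -log (1 - (x / (m * π)) ^ 2) := by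
  have hr : Summable fun m : ℕ+ => (x / (m * π)) ^ 2 := by
    refine summable_pnat_iff_summable_nat (f := fun n : ℕ => (x / (n * π)) ^ 2) |>.2 ?_
    refine ((Real.summable_nat_pow_inv.2 one_lt_two).mul_left ((x / π) ^ 2)).congr fun n => ?_
    field_simp
  have hr1 := sq_div_mul_pi_lt_one hx le_rfl
  refine .of_nonneg_of_le (fun m => ?_) (fun m => ?_) (hr.div_const (1 - (x / (1 * π)) ^ 2))
  · have hm := sq_div_mul_pi_lt_one hx (y := m) (mod_cast m.pos)
    have := log_nonpos (by linarith) (sub_le_self 1 (sq_nonneg (x / (m * π))))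
    linarith
  · have hm := sq_div_mul_pi_lt_one hx (y := m) (mod_cast m.pos)
    have hle : (x / (m * π)) ^ 2 ≤ (x / (1 * π)) ^ 2 := by
      rw [div_pow, div_pow]
      gcongr
      exact_mod_cast m.pos
    calc -log (1 - (x / (m * π)) ^ 2) ≤ (x / (m * π)) ^ 2 / (1 - (x / (m * π)) ^ 2) :=
          neg_log_one_sub_le_div_one_sub hm
      _ ≤ (x / (m * π)) ^ 2 / (1 - (x / (1 * π)) ^ 2) := by
          gcongr

lemma hasSum_log_one_sub_sq_div_mul_pi {x : ℝ} (hx : |x| < π) :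
    HasSum (fun m : ℕ+ => log (1 - (x / (m * π)) ^ 2)) (log (sin x / x)) := by
  rcases eq_or_ne x 0 with rfl | hx0
  · simp -- both sides vanish, the right one because `log 0 = 0`
  have hs := (summable_neg_log_one_sub_sq_div_mul_pi hx).neg
  simp only [neg_neg] at hs
  rw [summable_pnat_iff_summable_succ (f := fun n : ℕ => log (1 - (x / (n * π)) ^ 2))] at hs
  rw [hasSum_pnat_iff_hasSum_succ (f := fun n : ℕ => log (1 - (x / (n * π)) ^ 2)),
    hs.hasSum_iff_tendsto_nat]
  obtain ⟨hlo, hhi⟩ := abs_lt.1 hx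
  have hsin : sin x / x ≠ 0 :=
    div_ne_zero (fun h => hx0 ((sin_eq_zero_iff_of_lt_of_lt hlo hhi).1 h)) hx0
  have hprod : Tendsto (fun n => ∏ i ∈ range n, (1 - (x / ((i + 1 : ℕ) * π)) ^ 2)) atTop
      (𝓝 (sin x / x)) := by
    have := (tendsto_euler_sin_prod (x / π)).div_const x
    rw [mul_div_cancel₀ _ pi_ne_zero] at this
    refine this.congr fun n => ?_
    rw [mul_div_cancel_left₀ _ hx0]
    refine prod_congr rfl fun i _ => ?_
    push_cast
    field_simp
  refine ((continuousAt_log hsin).tendsto.comp hprod).congr fun n => ?_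
  rw [Function.comp_apply, log_prod]
  intro i _
  linarith [sq_div_mul_pi_lt_one hx (y := (i + 1 : ℕ)) (by simp)]

lemma tsum_sq_div_mul_pi_pow_div_eq_cCoeff_mul (x : ℝ) (k : ℕ+) :
    (∑' m : ℕ+, ((x / (m * π)) ^ 2) ^ (k : ℕ)) / k = cCoeff k * x ^ (2 * (k : ℕ)) := by
  have hterm : ∀ m : ℕ+, ((x / (m * π)) ^ 2) ^ (k : ℕ)
      = x ^ (2 * (k : ℕ)) / π ^ (2 * (k : ℕ)) * (1 / (m : ℝ) ^ (2 * (k : ℕ))) := fun m => by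
    rw [← pow_mul, div_pow, mul_pow]
    field_simp
  rw [tsum_congr hterm, tsum_mul_left, cCoeff]
  field_simp

theorem log_sin_div_eq_neg_tsum (x : ℝ) (hx0 : 0 ≤ x) (hxpi : x < Real.pi) :
    Summable (fun j : ℕ+ => cCoeff j * x ^ (2 * (j : ℕ))) ∧
    Real.log (Real.sin x / x) = -∑' j : ℕ+, cCoeff j * x ^ (2 * (j : ℕ)) := by
  have hx : |x| < π := abs_lt.2 ⟨by linarith [pi_pos], hxpi⟩
  have heuler := (hasSum_log_one_sub_sq_div_mul_pi hx).neg
  have h := hasSum_tsum_pow_div_tsum_neg_log_one_sub (fun _ => sq_nonneg _)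
    (fun m : ℕ+ => sq_div_mul_pi_lt_one hx (mod_cast m.pos)) heuler.summable
  simp only [heuler.tsum_eq, tsum_sq_div_mul_pi_pow_div_eq_cCoeff_mul] at h
  exact ⟨h.summable, by rw [h.tsum_eq, neg_neg]⟩
end

section
/- For every real x with 0 < x ≤ π, one has log(sin x / x) ≤ −x²/6, where at x = π the left side is interpreted as −∞ (i.e., sin x / x ≤ exp(−x²/6) for 0 < x ≤ π). -/
/-!
Euler's product `sin x / x = ∏_{k ≥ 1} (1 - x² / (π k)²)` has factors in `[0, 1]` when `|x| ≤ π`,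
and `1 - u ≤ exp (-u)` bounds it by `exp (-(x² / π²) ∑ 1 / k²) = exp (-x² / 6)`.
-/

open Real Filter Finset Topology

lemma Real.prod_one_sub_le_exp_neg_sum {ι : Type*} (s : Finset ι) {a : ι → ℝ}
    (ha : ∀ i ∈ s, a i ≤ 1) : ∏ i ∈ s, (1 - a i) ≤ exp (-∑ i ∈ s, a i) := by
  rw [← sum_neg_distrib, exp_sum]
  exact prod_le_prod (fun i hi => sub_nonneg.2 (ha i hi)) fun i _ => one_sub_le_exp_neg (a i)

lemma Real.hasSum_one_div_succ_sq :
    HasSum (fun n : ℕ => 1 / ((n : ℝ) + 1) ^ 2) (π ^ 2 / 6) := by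
  simpa using (hasSum_nat_add_iff' 1).2 hasSum_zeta_two

lemma Real.tendsto_prod_one_sub_sq_div_succ_sq (y : ℝ) :
    Tendsto (fun n : ℕ => ∏ j ∈ range n, (1 - y ^ 2 / ((j : ℝ) + 1) ^ 2)) atTop
      (𝓝 (sinc (π * y))) := by
  rcases eq_or_ne y 0 with rfl | hy
  · simp
  have hπy : π * y ≠ 0 := mul_ne_zero pi_ne_zero hy
  rw [sinc_of_ne_zero hπy]
  refine ((tendsto_euler_sin_prod y).div_const (π * y)).congr fun n => ?_
  field_simp

lemma Real.sinc_le_exp_neg_sq_div_six {x : ℝ} (hx : |x| ≤ π) : sinc x ≤ exp (-x ^ 2 / 6) := by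
  set y := x / π
  have hxy : π * y = x := mul_div_cancel₀ x pi_ne_zero
  have hy : y ^ 2 ≤ 1 := (sq_le_one_iff_abs_le_one y).2 <| by
    rw [abs_div, abs_of_pos pi_pos]
    exact div_le_one_of_le₀ hx pi_pos.le
  have hprod := tendsto_prod_one_sub_sq_div_succ_sq y
  rw [hxy] at hprod
  have hsum : HasSum (fun j : ℕ => y ^ 2 / ((j : ℝ) + 1) ^ 2) (x ^ 2 / 6) := by
    have h := hasSum_one_div_succ_sq.mul_left (y ^ 2)
    rw [show y ^ 2 * (π ^ 2 / 6) = x ^ 2 / 6 by rw [← hxy]; ring] at h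
    simpa only [mul_one_div] using h
  have hexp := (hsum.tendsto_sum_nat.neg).rexp
  rw [← neg_div] at hexp
  refine le_of_tendsto_of_tendsto' hprod hexp fun n => prod_one_sub_le_exp_neg_sum _ fun j _ => ?_
  have hj : (1 : ℝ) ≤ ((j : ℝ) + 1) ^ 2 := one_le_pow₀ (by linarith [j.cast_nonneg (α := ℝ)])
  exact div_le_one_of_le₀ (hy.trans hj) (by positivity)

theorem sin_div_le_exp_neg_sq_div_six (x : ℝ) (hx0 : 0 < x) (hxpi : x ≤ Real.pi) :
    Real.sin x / x ≤ Real.exp (-x ^ 2 / 6) := by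
  rw [← sinc_of_ne_zero hx0.ne']
  exact sinc_le_exp_neg_sq_div_six (abs_le.2 ⟨by linarith [pi_pos], hxpi⟩)
end

section
/- Let k > 0, θ ∈ (0,1), and 0 ≤ d ≤ π/√k. Define S_k(d) := sin(√k d)/(√k d) for d > 0 and S_k(0) := 1, and Φ(d) := (n−1)(log S_k(d) − (1−θ) log S_k((1−θ)d) − θ log S_k(θd)) for a positive integer n ≥ 2. Then Φ(d) ≤ −((n−1)k/2)·θ(1−θ)·d², provided d < π/√k (so that all logarithms are finite). -/
/-!
Here `S_k d = sinc (√k d)`. Remove the quadratic part of `log sinc`: `g x = log (sinc x) + x ^ 2 / 6`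
is antitone on `[0, π)`, since `g' x = -(sin x * (1 - x ^ 2 / 3) - x * cos x) / (x * sin x)` and the
numerator vanishes at `0` with derivative `x / 3 * (sin x - x * cos x) ≥ 0`. Comparing `g` at `x` with
`g` at `θ x` and `(1 - θ) x` leaves only the quadratic parts, and `1 - (1 - θ) ^ 3 - θ ^ 3 = 3 θ (1 - θ)`.
-/

/-- `S_k(d) = sin(√k d)/(√k d)` for `d ≠ 0`, and `S_k(0) = 1`. -/
noncomputable def Sk (k d : ℝ) : ℝ :=
  if d = 0 then 1 else Real.sin (Real.sqrt k * d) / (Real.sqrt k * d)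

open Real Set Filter Topology

lemma Sk_eq_sinc {k : ℝ} (hk : 0 < k) (d : ℝ) : Sk k d = sinc (√k * d) := by
  by_cases hd : d = 0
  · simp [Sk, hd]
  · rw [Sk, if_neg hd, sinc_of_ne_zero (mul_ne_zero (sqrt_pos.2 hk).ne' hd)]

namespace Real

lemma mul_cos_le_sin {x : ℝ} (h0 : 0 ≤ x) (hx : x ≤ π) : x * cos x ≤ sin x := by
  have hderiv (y : ℝ) : HasDerivAt (fun x => sin x - x * cos x) (y * sin y) y :=
    ((hasDerivAt_sin y).sub ((hasDerivAt_id' y).mul (hasDerivAt_cos y))).congr_deriv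
      (by ring)
  have hmono : MonotoneOn (fun x => sin x - x * cos x) (Icc 0 π) := by
    refine monotoneOn_of_hasDerivWithinAt_nonneg (convex_Icc 0 π) (by fun_prop)
      (fun y _ => (hderiv y).hasDerivWithinAt) fun y hy => ?_
    rw [interior_Icc] at hy
    exact mul_nonneg hy.1.le (sin_nonneg_of_nonneg_of_le_pi hy.1.le hy.2.le)
  have := hmono (left_mem_Icc.2 pi_pos.le) ⟨h0, hx⟩ h0
  simp only [sin_zero, zero_mul, sub_zero] at this
  linarith

lemma mul_cos_le_sin_mul_one_sub_sq_div_three {x : ℝ} (h0 : 0 ≤ x) (hx : x ≤ π) :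
    x * cos x ≤ sin x * (1 - x ^ 2 / 3) := by
  have hderiv (y : ℝ) : HasDerivAt (fun x => sin x * (1 - x ^ 2 / 3) - x * cos x)
      (y / 3 * (sin y - y * cos y)) y :=
    (((hasDerivAt_sin y).mul (((hasDerivAt_pow 2 y).div_const 3).const_sub 1)).sub
      ((hasDerivAt_id' y).mul (hasDerivAt_cos y))).congr_deriv (by ring)
  have hmono : MonotoneOn (fun x => sin x * (1 - x ^ 2 / 3) - x * cos x) (Icc 0 π) := by
    refine monotoneOn_of_hasDerivWithinAt_nonneg (convex_Icc 0 π) (by fun_prop)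
      (fun y _ => (hderiv y).hasDerivWithinAt) fun y hy => ?_
    rw [interior_Icc] at hy
    exact mul_nonneg (by linarith [hy.1]) (sub_nonneg.2 (mul_cos_le_sin hy.1.le hy.2.le))
  have := hmono (left_mem_Icc.2 pi_pos.le) ⟨h0, hx⟩ h0
  simp only [sin_zero, zero_mul, sub_zero] at this
  linarith

lemma sinc_pos {x : ℝ} (hx : |x| < π) : 0 < sinc x := by
  by_cases h0 : x = 0
  · simp [h0]
  have habs : sinc x = sinc |x| := by
    rcases abs_choice x with h | h <;> rw [h]
    rw [sinc_neg]
  rw [habs, sinc_of_ne_zero (abs_ne_zero.2 h0)]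
  exact div_pos (sin_pos_of_pos_of_lt_pi (abs_pos.2 h0) hx) (abs_pos.2 h0)

lemma hasDerivAt_log_sinc {x : ℝ} (hx : x ≠ 0) (hsin : sin x ≠ 0) :
    HasDerivAt (fun x => log (sinc x)) (cos x / sin x - x⁻¹) x := by
  have heq : (fun t => log (sinc t)) =ᶠ[𝓝 x] fun t => log (sin t) - log t := by
    filter_upwards [isOpen_ne.mem_nhds hx,
      (isOpen_ne_fun continuous_sin continuous_const).mem_nhds hsin] with t ht hst
    rw [sinc_of_ne_zero ht, log_div hst ht]
  exact (((hasDerivAt_sin x).log hsin).sub (hasDerivAt_log hx)).congr_of_eventuallyEq heq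

lemma antitoneOn_log_sinc_add_sq_div_six :
    AntitoneOn (fun x => log (sinc x) + x ^ 2 / 6) (Ico 0 π) := by
  have hsinc : ∀ x ∈ Ico 0 π, 0 < sinc x := fun x hx =>
    sinc_pos (by rw [abs_of_nonneg hx.1]; exact hx.2)
  refine antitoneOn_of_hasDerivWithinAt_nonpos (convex_Ico 0 π)
    (f' := fun y => cos y / sin y - y⁻¹ + y / 3)
    (((continuous_sinc.continuousOn).log fun x hx => (hsinc x hx).ne').add (by fun_prop))
    (fun y hy => ?_) (fun y hy => ?_) <;> rw [interior_Ico] at hy <;>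
    have hs : 0 < sin y := sin_pos_of_pos_of_lt_pi hy.1 hy.2
  · exact ((hasDerivAt_log_sinc hy.1.ne' hs.ne').add
      (((hasDerivAt_pow 2 y).div_const 6).congr_deriv (by ring))).hasDerivWithinAt
  · have hy0 : y ≠ 0 := hy.1.ne'
    have key := mul_cos_le_sin_mul_one_sub_sq_div_three hy.1.le hy.2.le
    have : cos y / sin y - y⁻¹ + y / 3
        = -(sin y * (1 - y ^ 2 / 3) - y * cos y) / (y * sin y) := by
      field_simp; ring
    rw [this]
    exact div_nonpos_of_nonpos_of_nonneg (by linarith) (mul_pos hy.1 hs).le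

lemma log_sinc_sub_convex_comb_le {x θ : ℝ} (hx0 : 0 ≤ x) (hxπ : x < π)
    (hθ0 : 0 ≤ θ) (hθ1 : θ ≤ 1) :
    log (sinc x) - (1 - θ) * log (sinc ((1 - θ) * x)) - θ * log (sinc (θ * x))
      ≤ -(θ * (1 - θ) / 2) * x ^ 2 := by
  have hx : x ∈ Ico 0 π := ⟨hx0, hxπ⟩
  have hle {t : ℝ} (ht0 : 0 ≤ t) (ht1 : t ≤ 1) :
      log (sinc x) + x ^ 2 / 6 ≤ log (sinc (t * x)) + (t * x) ^ 2 / 6 := by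
    have htx : t * x ≤ x := mul_le_of_le_one_left hx0 ht1
    exact antitoneOn_log_sinc_add_sq_div_six ⟨mul_nonneg ht0 hx0, htx.trans_lt hxπ⟩ hx htx
  have h1 := mul_le_mul_of_nonneg_left (hle (sub_nonneg.2 hθ1) (by linarith)) (sub_nonneg.2 hθ1)
  have h2 := mul_le_mul_of_nonneg_left (hle hθ0 hθ1) hθ0
  nlinarith

end Real

theorem Phi_le (n : ℕ) (hn : 2 ≤ n) (k : ℝ) (hk : 0 < k)
    (θ : ℝ) (hθ0 : 0 < θ) (hθ1 : θ < 1)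
    (d : ℝ) (hd0 : 0 ≤ d) (hd : d < Real.pi / Real.sqrt k) :
    (n - 1 : ℝ) * (Real.log (Sk k d)
        - (1 - θ) * Real.log (Sk k ((1 - θ) * d))
        - θ * Real.log (Sk k (θ * d)))
      ≤ -((n - 1 : ℝ) * k / 2) * θ * (1 - θ) * d ^ 2 := by
  have hn1 : (0 : ℝ) ≤ n - 1 := by
    have : (2 : ℝ) ≤ n := by exact_mod_cast hn
    linarith
  have hx : √k * d < π := (lt_div_iff₀' (sqrt_pos.2 hk)).1 hd
  simp only [Sk_eq_sinc hk, mul_left_comm √k]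
  calc _ ≤ (n - 1 : ℝ) * (-(θ * (1 - θ) / 2) * (√k * d) ^ 2) :=
        mul_le_mul_of_nonneg_left
          (log_sinc_sub_convex_comb_le (by positivity) hx hθ0.le hθ1.le) hn1
    _ = _ := by rw [mul_pow, sq_sqrt hk.le]; ring
end
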